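/- The subgroup N is abelian, and there is a group isomorphism ψ: N → Z_1(ℤ²) such that ψ(x^m y^n z (x^m y^n)^{-1}) = p((m,n)) for all m, n ∈ ℤ; moreover ψ is equivariant with respect to conjugation: ψ(g u g^{-1}) = π(g)·ψ(u) for every g ∈ Met_k(2) and u ∈ N, where π: Met_k(2) → ℤ² is the projection with π(x) = e_1, π(y) = e_2, π(z) = 0. Thus N is isomorphic to the first homology group H_1(E²) of the lattice as a group with operators from ℤ². -/

import Mathlib

/-- The free generators `x, y, z` of the presentation of `Met_k(2)`. -/
def xg : FreeGroup (Fin 3) := FreeGroup.of 0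
def yg : FreeGroup (Fin 3) := FreeGroup.of 1
def zg : FreeGroup (Fin 3) := FreeGroup.of 2

/-- The word `x^m y^n` in the free group. -/
def wmn (m n : ℤ) : FreeGroup (Fin 3) := xg ^ m * yg ^ n

open scoped commutatorElement

/-- The relators of `Met_k(2)`: `[x,y] z^{-k}` (i.e. `[x,y] = z^k`) and
`[w z w⁻¹, w' z w'⁻¹]` for all `w = x^m y^n`, `w' = x^{m'} y^{n'}` (all such conjugates
of `z` commute). -/
def metRels (k : ℤ) : Set (FreeGroup (Fin 3)) :=
  {r | r = ⁅xg, yg⁆ * zg ^ (-k) ∨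
    ∃ m n m' n' : ℤ,
      r = ⁅wmn m n * zg * (wmn m n)⁻¹, wmn m' n' * zg * (wmn m' n')⁻¹⁆}

/-- The group `Met_k(2)`, presented by generators `x, y, z` and the above relations. -/
abbrev Met2 (k : ℤ) : Type := PresentedGroup (metRels k)

/-- The generator `x` of `Met_k(2)`. -/
def X (k : ℤ) : Met2 k := PresentedGroup.of 0
/-- The generator `y` of `Met_k(2)`. -/
def Y (k : ℤ) : Met2 k := PresentedGroup.of 1
/-- The generator `z` of `Met_k(2)`. -/
def Z (k : ℤ) : Met2 k := PresentedGroup.of 2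

/-- `N`: the smallest normal subgroup of `Met_k(2)` containing `z`. -/
def Nsub (k : ℤ) : Subgroup (Met2 k) := Subgroup.normalClosure {Z k}

instance (k : ℤ) : (Nsub k).Normal := Subgroup.normalClosure_normal

/-- The lattice `ℤ²`. -/
abbrev Z2 : Type := Fin 2 → ℤ

/-- Edge chains of the grid complex `E²` (Cayley graph of `ℤ²`). -/
abbrev C1Z2 : Type := (Z2 × Fin 2) →₀ ℤ

/-- Vertex chains: the free abelian group on `ℤ²`. -/
abbrev C0Z2 : Type := Z2 →₀ ℤ

/-- Translation action of `v ∈ ℤ²` on edge chains: `v • δ_{(m,i)} = δ_{(m+v,i)}`. -/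
noncomputable def shiftZ (v : Z2) : C1Z2 →+ C1Z2 :=
  Finsupp.mapDomain.addMonoidHom fun p => (v + p.1, p.2)

/-- The boundary map `∂ δ_{(m,i)} = δ_{m + e i} - δ_m`; its kernel is
`Z_1(ℤ²) = H_1(E²)`. -/
noncomputable def bdZ : C1Z2 →+ C0Z2 :=
  Finsupp.liftAddHom fun p =>
    zmultiplesHom C0Z2
      (Finsupp.single (p.1 + Pi.single p.2 1) 1 - Finsupp.single p.1 1)

/-- The plaquette `p(m) = δ_{(m,1)} + δ_{(m+e₁,2)} - δ_{(m+e₂,1)} - δ_{(m,2)}`. -/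
noncomputable def plaq2 (m : Z2) : C1Z2 :=
  Finsupp.single (m, 0) 1 + Finsupp.single (m + Pi.single 0 1, 1) 1
    - Finsupp.single (m + Pi.single 1 1, 0) 1 - Finsupp.single (m, 1) 1

/-!
The semidirect product `C₁(ℤ²) ⋊ ℤ²` (translations acting on edge chains) is a model of
`Met_k(2)`: `x ↦ (k δ_{(0,1)}, e₁)`, `y ↦ (k δ_{(0,2)}, e₂)`, `z ↦ (p(0), 0)` satisfies the
relations, its second coordinate is `π`, and it sends `c(m) = x^{m₁} y^{m₂} z (x^{m₁} y^{m₂})⁻¹`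
(`conjZ`) to `p(m)`. In `Met_k(2)` the `c(m)` commute by the relations, and conjugation by `x`,
`y`, `z` translates them (for `y` because `[y, x^a]` is a product of `c(m)`'s), so `N` is the
abelian group they generate and the model restricts to `ψ : N → Z₁(ℤ²)` (`toCycles`).
`ψ` is bijective thanks to `A = retract : C₁ → C₀`, sending a horizontal edge at `m` to minus the
column of vertices below `m`: with `P = plaqMap`, `δ_m ↦ p(m)`, we have `A ∘ P = id` and
`id - P ∘ A = B ∘ ∂`, where `B = staircase` sends `δ_m` to a staircase path from `0` to `m`; so
`P ∘ A = id` on cycles. Since `δ_m ↦ c(m)` maps `C₀` onto `N` and composes with `ψ` to `P`,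
`ψ` is injective and surjective.
-/

section GroupLemmas

variable {G : Type*} [Group G]

open Subgroup

lemma Subgroup.mem_normalizer_range_of_conj {ι : Type*} {f : ι → G} {g : G} {σ : ι → ι}
    (hσ : Function.Surjective σ) (h : ∀ i, g * f i * g⁻¹ = f (σ i)) :
    g ∈ normalizer (Set.range f) := by
  rw [mem_normalizer_iff_conj_image_eq, ← Set.range_comp, ← hσ.range_comp f]
  exact congrArg Set.range (funext h)

lemma commutatorElement_zpow_mem {H : Subgroup G} {x y : G} (hx : x ∈ normalizer (H : Set G))
    (h : ⁅y, x⁆ ∈ H) (a : ℤ) : ⁅y, x ^ a⁆ ∈ H := by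
  have step : ∀ b : ℤ, ⁅y, x ^ (b + 1)⁆ = ⁅y, x ^ b⁆ * (x ^ b * ⁅y, x⁆ * (x ^ b)⁻¹) := by
    intro b; simp only [commutatorElement_def]; group
  have conj_mem : ∀ b : ℤ, x ^ b * ⁅y, x⁆ * (x ^ b)⁻¹ ∈ H := fun b =>
    (mem_normalizer_iff.mp (zpow_mem hx b) _).mp h
  induction a using Int.induction_on with
  | zero => simp
  | succ a ih => rw [step]; exact mul_mem ih (conj_mem a)
  | pred a ih =>
    have hstep := step (-a - 1)
    rw [sub_add_cancel] at hstep
    rw [eq_mul_inv_of_mul_eq hstep.symm]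
    exact mul_mem ih (inv_mem (conj_mem _))

end GroupLemmas

open Finsupp

lemma bdZ_single (m : Z2) (i : Fin 2) (n : ℤ) :
    bdZ (single (m, i) n) = n • (single (m + Pi.single i 1) 1 - single m 1) := by
  simp [bdZ]

lemma shiftZ_single (v m : Z2) (i : Fin 2) (n : ℤ) :
    shiftZ v (single (m, i) n) = single (v + m, i) n := by
  simp [shiftZ]

lemma shiftZ_zero : shiftZ 0 = AddMonoidHom.id C1Z2 :=
  Finsupp.addHom_ext fun ⟨m, i⟩ n => by simp [shiftZ_single]

lemma shiftZ_add (v w : Z2) : shiftZ (v + w) = (shiftZ v).comp (shiftZ w) :=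
  Finsupp.addHom_ext fun ⟨m, i⟩ n => by simp [shiftZ_single, add_assoc]

lemma bdZ_plaq2 (m : Z2) : bdZ (plaq2 m) = 0 := by
  simp only [plaq2, map_add, map_sub, bdZ_single, one_smul, add_right_comm m (Pi.single 0 1)]
  abel

lemma shiftZ_plaq2 (v m : Z2) : shiftZ v (plaq2 m) = plaq2 (v + m) := by
  simp only [plaq2, map_add, map_sub, shiftZ_single, add_assoc]

/-- `![a, b]` has type `Fin (Nat.succ 1) → ℤ`, only defeq to `Z2`, which defeats `abel`. -/
def Z2.mk (a b : ℤ) : Z2 := ![a, b]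

@[simp] lemma Z2.mk_apply_zero (a b : ℤ) : Z2.mk a b 0 = a := rfl

@[simp] lemma Z2.mk_apply_one (a b : ℤ) : Z2.mk a b 1 = b := rfl

@[simp] lemma Z2.mk_eta (m : Z2) : Z2.mk (m 0) (m 1) = m := by
  ext i; fin_cases i <;> rfl

lemma add_single_zero_eq (m : Z2) : m + Pi.single 0 1 = Z2.mk (m 0 + 1) (m 1) := by
  ext i; fin_cases i <;> simp [Z2.mk]

lemma add_single_one_eq (m : Z2) : m + Pi.single 1 1 = Z2.mk (m 0) (m 1 + 1) := by
  ext i; fin_cases i <;> simp [Z2.mk]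

section SignedSum

variable {M : Type*} [AddCommGroup M]

/-- `∑_{0 ≤ j < b} f j` for `b ≥ 0`, and `-∑_{b ≤ j < 0} f j` for `b < 0`. -/
def signedSum (f : ℤ → M) (b : ℤ) : M :=
  ∑ j ∈ Finset.range b.toNat, f j - ∑ j ∈ Finset.range (-b).toNat, f (-(j + 1 : ℕ))

@[simp] lemma signedSum_zero (f : ℤ → M) : signedSum f 0 = 0 := by
  simp [signedSum]

lemma signedSum_add_one (f : ℤ → M) (b : ℤ) : signedSum f (b + 1) = signedSum f b + f b := by
  rcases le_or_gt 0 b with hb | hb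
  · rw [signedSum, signedSum, show (b + 1).toNat = b.toNat + 1 by omega, Finset.sum_range_succ,
      show (-b).toNat = 0 by omega, show (-(b + 1)).toNat = 0 by omega, Int.toNat_of_nonneg hb]
    simp
  · obtain ⟨n, rfl⟩ : ∃ n : ℕ, b = -(n + 1 : ℕ) := ⟨(-b - 1).toNat, by omega⟩
    rw [signedSum, signedSum, show (-(n + 1 : ℕ) + 1 : ℤ).toNat = 0 by omega,
      show (-((n + 1 : ℕ) : ℤ)).toNat = 0 by omega,
      show (-(-(n + 1 : ℕ) + 1 : ℤ)).toNat = n by omega,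
      show (-(-((n + 1 : ℕ) : ℤ))).toNat = n + 1 by omega, Finset.sum_range_succ]
    simp

lemma signedSum_sub_one (f : ℤ → M) (b : ℤ) : signedSum f (b - 1) = signedSum f b - f (b - 1) := by
  rw [eq_sub_iff_add_eq, ← signedSum_add_one, sub_add_cancel]

end SignedSum

noncomputable def colSum (a b : ℤ) : C0Z2 := signedSum (fun j => single (Z2.mk a j) 1) b

noncomputable def vertPath (a b : ℤ) : C1Z2 := signedSum (fun j => single (Z2.mk a j, 1) 1) b

noncomputable def horizPath (a : ℤ) : C1Z2 := signedSum (fun i => single (Z2.mk i 0, 0) 1) a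

noncomputable def plaqMap : C0Z2 →ₗ[ℤ] C1Z2 := linearCombination ℤ plaq2

noncomputable def retract : C1Z2 →ₗ[ℤ] C0Z2 :=
  linearCombination ℤ fun p => if p.2 = 0 then -colSum (p.1 0) (p.1 1) else 0

noncomputable def staircase : C0Z2 →ₗ[ℤ] C1Z2 :=
  linearCombination ℤ fun m => horizPath (m 0) + vertPath (m 0) (m 1)

lemma colSum_add_one (a b : ℤ) : colSum a (b + 1) = colSum a b + single (Z2.mk a b) 1 :=
  signedSum_add_one _ b

lemma colSum_sub_one (a b : ℤ) : colSum a (b - 1) = colSum a b - single (Z2.mk a (b - 1)) 1 :=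
  signedSum_sub_one _ b

lemma vertPath_add_one (a b : ℤ) : vertPath a (b + 1) = vertPath a b + single (Z2.mk a b, 1) 1 :=
  signedSum_add_one _ b

lemma vertPath_sub_one (a b : ℤ) :
    vertPath a (b - 1) = vertPath a b - single (Z2.mk a (b - 1), 1) 1 :=
  signedSum_sub_one _ b

lemma horizPath_add_one (a : ℤ) : horizPath (a + 1) = horizPath a + single (Z2.mk a 0, 0) 1 :=
  signedSum_add_one _ a

lemma plaqMap_single (m : Z2) (n : ℤ) : plaqMap (single m n) = n • plaq2 m :=
  linearCombination_single _ _ _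

lemma retract_plaq2 (m : Z2) : retract (plaq2 m) = single m 1 := by
  simp only [plaq2, map_add, map_sub, retract, linearCombination_single, add_single_zero_eq,
    add_single_one_eq, one_smul]
  simp [colSum_add_one]

lemma retract_plaqMap (d : C0Z2) : retract (plaqMap d) = d := by
  induction d using Finsupp.induction_linear with
  | zero => simp
  | add d e hd he => rw [map_add, map_add, hd, he]
  | single m n => rw [plaqMap, linearCombination_single, map_zsmul, retract_plaq2, smul_single_one]

lemma plaqMap_colSum (a b : ℤ) :
    plaqMap (colSum a b) = single (Z2.mk a 0, 0) 1 - single (Z2.mk a b, 0) 1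
      + vertPath (a + 1) b - vertPath a b := by
  induction b using Int.induction_on with
  | zero => simp [colSum, vertPath]
  | succ b ih =>
    simp only [colSum_add_one, vertPath_add_one, map_add, ih, plaqMap_single, one_smul, plaq2,
      add_single_zero_eq, add_single_one_eq, Z2.mk_apply_zero, Z2.mk_apply_one]
    abel
  | pred b ih =>
    simp only [colSum_sub_one, vertPath_sub_one, map_sub, ih, plaqMap_single, one_smul, plaq2,
      add_single_zero_eq, add_single_one_eq, Z2.mk_apply_zero, Z2.mk_apply_one,
      sub_add_cancel]
    abel

lemma sub_plaqMap_retract_horizontal (m : Z2) :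
    single (m, 0) 1 - plaqMap (retract (single (m, 0) 1)) = staircase (bdZ (single (m, 0) 1)) := by
  simp only [retract, staircase, linearCombination_single, bdZ_single, plaqMap_colSum,
    add_single_zero_eq, horizPath_add_one, Z2.mk_eta, Z2.mk_apply_zero, Z2.mk_apply_one, ite_true,
    smul_neg, smul_add, one_smul, map_neg, map_sub, neg_sub]
  abel

lemma sub_plaqMap_retract_vertical (m : Z2) :
    single (m, 1) 1 - plaqMap (retract (single (m, 1) 1)) = staircase (bdZ (single (m, 1) 1)) := by
  simp [retract, staircase, bdZ_single, add_single_one_eq, vertPath_add_one]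

lemma sub_plaqMap_retract (c : C1Z2) : c - plaqMap (retract c) = staircase (bdZ c) := by
  induction c using Finsupp.induction_linear with
  | zero => simp
  | add c d hc hd => simp only [map_add, ← hc, ← hd]; abel
  | single p n =>
    obtain ⟨m, i⟩ := p
    rw [← smul_single_one, map_zsmul, map_zsmul, map_zsmul, map_zsmul, ← smul_sub]
    congr 1
    fin_cases i
    exacts [sub_plaqMap_retract_horizontal m, sub_plaqMap_retract_vertical m]

lemma plaqMap_retract_of_bdZ_eq_zero {c : C1Z2} (hc : bdZ c = 0) : plaqMap (retract c) = c := by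
  rw [eq_comm, ← sub_eq_zero, sub_plaqMap_retract, hc, map_zero]

namespace SemidirectProduct

variable {N G : Type*} [Group G]

lemma mul_inv_eq_inl_of_right_eq [Group N] {φ : G →* MulAut N} {p q : N ⋊[φ] G}
    (h : p.right = q.right) : p * q⁻¹ = inl (p.left * q.left⁻¹) := by
  refine SemidirectProduct.ext ?_ ?_ <;> simp [h]

variable [CommGroup N] {φ : G →* MulAut N}

lemma mul_inl_mul_inv (g : N ⋊[φ] G) (n : N) : g * inl n * g⁻¹ = inl (φ g.right n) := by
  obtain ⟨l, r⟩ := g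
  calc (⟨l, r⟩ : N ⋊[φ] G) * inl n * (⟨l, r⟩ : N ⋊[φ] G)⁻¹
      = inl l * (inr r * inl n * inr r⁻¹) * (inl l)⁻¹ := by rw [mk_eq_inl_mul_inr, map_inv]; group
    _ = inl (φ r n) := by rw [← inl_aut, ← map_inv, ← map_mul, ← map_mul, mul_inv_cancel_comm]

lemma mul_comm_of_right_eq_one {a b : N ⋊[φ] G} (ha : a.right = 1) (hb : b.right = 1) :
    a * b = b * a := by
  refine SemidirectProduct.ext ?_ ?_ <;> simp [ha, hb, mul_comm]

end SemidirectProduct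

namespace Met2

open Multiplicative SemidirectProduct Subgroup Finsupp
open scoped IsMulCommutative

variable {k : ℤ}

noncomputable def shiftEquiv (v : Z2) : C1Z2 ≃+ C1Z2 where
  toFun := shiftZ v
  invFun := shiftZ (-v)
  left_inv c := by rw [← AddMonoidHom.comp_apply, ← shiftZ_add, neg_add_cancel, shiftZ_zero]; rfl
  right_inv c := by rw [← AddMonoidHom.comp_apply, ← shiftZ_add, add_neg_cancel, shiftZ_zero]; rfl
  map_add' := map_add _

noncomputable def shiftAct : Multiplicative Z2 →* MulAut (Multiplicative C1Z2) where
  toFun v := (shiftEquiv v.toAdd).toMultiplicative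
  map_one' := MulEquiv.ext fun c => congrArg ofAdd (DFunLike.congr_fun shiftZ_zero c.toAdd)
  map_mul' v w := MulEquiv.ext fun c =>
    congrArg ofAdd (DFunLike.congr_fun (shiftZ_add v.toAdd w.toAdd) c.toAdd)

lemma shiftAct_apply (v : Multiplicative Z2) (c : Multiplicative C1Z2) :
    shiftAct v c = ofAdd (shiftZ v.toAdd c.toAdd) := rfl

abbrev Model : Type := Multiplicative C1Z2 ⋊[shiftAct] Multiplicative Z2

-- The edge parts are chosen so that `⁅gx k, gy k⁆ = gz ^ k`.
noncomputable def gx (k : ℤ) : Model :=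
  inl (ofAdd (k • single (0, 0) 1)) * inr (ofAdd (Pi.single 0 1))

noncomputable def gy (k : ℤ) : Model :=
  inl (ofAdd (k • single (0, 1) 1)) * inr (ofAdd (Pi.single 1 1))

noncomputable def gz : Model := inl (ofAdd (plaq2 0))

@[simp] lemma left_gx (k : ℤ) : (gx k).left = ofAdd (k • single (0, 0) 1) := by simp [gx]

@[simp] lemma right_gx (k : ℤ) : (gx k).right = ofAdd (Pi.single 0 1) := by simp [gx]

@[simp] lemma left_gy (k : ℤ) : (gy k).left = ofAdd (k • single (0, 1) 1) := by simp [gy]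

@[simp] lemma right_gy (k : ℤ) : (gy k).right = ofAdd (Pi.single 1 1) := by simp [gy]

lemma commutatorElement_gx_gy (k : ℤ) : ⁅gx k, gy k⁆ = gz ^ k := by
  rw [commutatorElement_def, mul_assoc, mul_assoc, ← mul_inv_rev, ← mul_assoc,
    mul_inv_eq_inl_of_right_eq (by simp [mul_comm]), gz,
    ← map_zpow (inl : Multiplicative C1Z2 →* Model), ← ofAdd_zsmul]
  congr 1
  apply toAdd.injective
  simp only [mul_left, left_gx, right_gx, left_gy, right_gy, shiftAct_apply, toAdd_mul, toAdd_inv,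
    toAdd_ofAdd, map_zsmul, shiftZ_single, add_zero, plaq2, zero_add]
  module

noncomputable def modelGen (k : ℤ) : Fin 3 → Model := ![gx k, gy k, gz]

lemma lift_modelGen_conj_right (k m n : ℤ) :
    (FreeGroup.lift (modelGen k) (wmn m n * zg * (wmn m n)⁻¹)).right = 1 := by
  simp [zg, modelGen, gz]

lemma lift_modelGen_metRels (k : ℤ) : ∀ r ∈ metRels k, FreeGroup.lift (modelGen k) r = 1 := by
  rintro r (rfl | ⟨m, n, m', n', rfl⟩)
  · simp [xg, yg, zg, modelGen, commutatorElement_gx_gy]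
  · rw [map_commutatorElement, commutatorElement_eq_one_iff_mul_comm]
    exact mul_comm_of_right_eq_one (lift_modelGen_conj_right k m n)
      (lift_modelGen_conj_right k m' n')

noncomputable def toModel (k : ℤ) : Met2 k →* Model :=
  PresentedGroup.toGroup (lift_modelGen_metRels k)

@[simp] lemma toModel_X : toModel k (X k) = gx k := PresentedGroup.toGroup.of _

@[simp] lemma toModel_Y : toModel k (Y k) = gy k := PresentedGroup.toGroup.of _

@[simp] lemma toModel_Z : toModel k (Z k) = gz := PresentedGroup.toGroup.of _

noncomputable def proj (k : ℤ) : Met2 k →* Multiplicative Z2 := rightHom.comp (toModel k)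

lemma proj_apply (g : Met2 k) : proj k g = (toModel k g).right := rfl

lemma proj_X_zpow_mul_Y_zpow (m : Z2) : proj k (X k ^ m 0 * Y k ^ m 1) = ofAdd m := by
  simp only [map_mul, map_zpow, proj_apply, toModel_X, toModel_Y, right_gx, right_gy]
  apply toAdd.injective
  ext i
  fin_cases i <;> simp

noncomputable def conjZ (k : ℤ) (m : Z2) : Met2 k :=
  (X k ^ m 0 * Y k ^ m 1) * Z k * (X k ^ m 0 * Y k ^ m 1)⁻¹

lemma conjZ_zero : conjZ k 0 = Z k := by simp [conjZ]

lemma mk_metRels_eq_one {r : FreeGroup (Fin 3)} (hr : r ∈ metRels k) :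
    PresentedGroup.mk (metRels k) r = 1 :=
  (QuotientGroup.eq_one_iff _).mpr (subset_normalClosure hr)

lemma conjZ_mul_comm (m m' : Z2) : conjZ k m * conjZ k m' = conjZ k m' * conjZ k m := by
  have h := mk_metRels_eq_one (k := k) (Or.inr ⟨m 0, m 1, m' 0, m' 1, rfl⟩)
  rwa [map_commutatorElement, commutatorElement_eq_one_iff_mul_comm] at h

lemma commutatorElement_X_Y : ⁅X k, Y k⁆ = Z k ^ k := by
  have h := mk_metRels_eq_one (k := k) (Or.inl rfl)
  rwa [map_mul, map_commutatorElement, map_zpow, zpow_neg, mul_inv_eq_one] at h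

lemma X_conj_conjZ (m : Z2) : X k * conjZ k m * (X k)⁻¹ = conjZ k (m + Pi.single 0 1) := by
  simp only [conjZ, Pi.add_apply, Pi.single_eq_same, Pi.single_eq_of_ne one_ne_zero, add_zero,
    zpow_add, zpow_one]
  group

lemma Z_conj_conjZ (m : Z2) : Z k * conjZ k m * (Z k)⁻¹ = conjZ k m := by
  rw [← conjZ_zero, conjZ_mul_comm, mul_inv_cancel_right]

noncomputable def conjClosure (k : ℤ) : Subgroup (Met2 k) := closure (Set.range (conjZ k))

instance : IsMulCommutative (conjClosure k) :=
  isMulCommutative_closure (by rintro _ ⟨m, rfl⟩ _ ⟨m', rfl⟩; exact conjZ_mul_comm m m')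

lemma conjZ_mem (m : Z2) : conjZ k m ∈ conjClosure k := subset_closure ⟨m, rfl⟩

lemma X_mem_normalizer_range : X k ∈ normalizer (Set.range (conjZ k)) :=
  mem_normalizer_range_of_conj (add_right_surjective (Pi.single 0 1)) X_conj_conjZ

lemma Z_mem_normalizer_range : Z k ∈ normalizer (Set.range (conjZ k)) :=
  mem_normalizer_range_of_conj Function.surjective_id Z_conj_conjZ

lemma commutatorElement_Y_X_zpow_mem (a : ℤ) : ⁅Y k, X k ^ a⁆ ∈ conjClosure k := by
  refine commutatorElement_zpow_mem (normalizer_le_normalizer_closure _ X_mem_normalizer_range) ?_ a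
  rw [← commutatorElement_inv, commutatorElement_X_Y, ← zpow_neg, ← conjZ_zero]
  exact zpow_mem (conjZ_mem 0) _

lemma Y_conj_conjZ (m : Z2) : Y k * conjZ k m * (Y k)⁻¹ = conjZ k (m + Pi.single 1 1) := by
  set E := ⁅Y k, X k ^ m 0⁆
  have h : Y k * conjZ k m * (Y k)⁻¹ = E * conjZ k (m + Pi.single 1 1) * E⁻¹ := by
    simp only [E, conjZ, commutatorElement_def, Pi.add_apply, Pi.single_eq_same,
      Pi.single_eq_of_ne zero_ne_one, add_zero, zpow_add, zpow_one]
    group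
  rw [h, setLike_mul_comm (commutatorElement_Y_X_zpow_mem _) (conjZ_mem _),
    mul_inv_cancel_right]

lemma Y_mem_normalizer_range : Y k ∈ normalizer (Set.range (conjZ k)) :=
  mem_normalizer_range_of_conj (add_right_surjective (Pi.single 1 1)) Y_conj_conjZ

instance : (conjClosure k).Normal := by
  refine normalizer_eq_top_iff.mp (eq_top_iff.mpr ?_)
  refine le_trans ?_ (normalizer_le_normalizer_closure _)
  rw [← PresentedGroup.closure_range_of, closure_le]
  rintro _ ⟨i, rfl⟩
  fin_cases i
  exacts [X_mem_normalizer_range, Y_mem_normalizer_range, Z_mem_normalizer_range]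

lemma Nsub_eq_conjClosure : Nsub k = conjClosure k := by
  refine le_antisymm (normalClosure_le_normal ?_) ((closure_le _).mpr ?_)
  · rw [Set.singleton_subset_iff, ← conjZ_zero]
    exact conjZ_mem 0
  · rintro _ ⟨m, rfl⟩
    exact normalClosure_normal.conj_mem _ (subset_normalClosure (Set.mem_singleton _)) _

instance : IsMulCommutative (Nsub k) := Nsub_eq_conjClosure ▸ inferInstance

lemma toModel_conjZ (m : Z2) : toModel k (conjZ k m) = inl (ofAdd (plaq2 m)) := by
  rw [conjZ, map_mul, map_mul, map_inv, toModel_Z, gz, mul_inl_mul_inv, ← proj_apply,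
    proj_X_zpow_mul_Y_zpow, shiftAct_apply, toAdd_ofAdd, toAdd_ofAdd, shiftZ_plaq2, add_zero]

noncomputable def cycleInl : Multiplicative bdZ.ker →* Model :=
  inl.comp (AddMonoidHom.toMultiplicative bdZ.ker.subtype)

lemma cycleInl_injective : Function.Injective cycleInl :=
  inl_injective.comp (ofAdd.injective.comp (Subtype.val_injective.comp toAdd.injective))

lemma toModel_mem_range_cycleInl {u : Met2 k} (hu : u ∈ Nsub k) : toModel k u ∈ cycleInl.range := by
  suffices Nsub k ≤ cycleInl.range.comap (toModel k) from this hu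
  rw [Nsub_eq_conjClosure, conjClosure, closure_le]
  rintro _ ⟨m, rfl⟩
  exact ⟨ofAdd ⟨plaq2 m, bdZ_plaq2 m⟩, (toModel_conjZ m).symm⟩

noncomputable def toCycles (k : ℤ) : Nsub k →* Multiplicative bdZ.ker :=
  (MonoidHom.ofInjective cycleInl_injective).symm.toMonoidHom.comp
    (((toModel k).comp (Nsub k).subtype).codRestrict _ fun u => toModel_mem_range_cycleInl u.2)

lemma inl_toCycles (u : Nsub k) : inl (ofAdd ((toCycles k u).toAdd : C1Z2)) = toModel k u :=
  MonoidHom.apply_ofInjective_symm cycleInl_injective ⟨_, toModel_mem_range_cycleInl u.2⟩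

lemma toCycles_eq_of_toModel_eq {u : Nsub k} {c : C1Z2} (h : toModel k u = inl (ofAdd c)) :
    ((toCycles k u).toAdd : C1Z2) = c := by
  rw [← inl_toCycles] at h
  exact ofAdd.injective (inl_injective h)

noncomputable def fromChains (k : ℤ) : C0Z2 →ₗ[ℤ] Additive (Nsub k) :=
  linearCombination ℤ fun m =>
    Additive.ofMul ⟨conjZ k m, Nsub_eq_conjClosure ▸ conjZ_mem m⟩

lemma toCycles_fromChains (d : C0Z2) :
    ((toCycles k (fromChains k d).toMul).toAdd : C1Z2) = plaqMap d := by
  induction d using Finsupp.induction_linear with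
  | zero => simp
  | add d e hd he => simp [hd, he]
  | single m n =>
    simp only [fromChains, linearCombination_single, toMul_zsmul, map_zpow, toAdd_zpow,
      AddSubgroup.coe_zsmul, plaqMap_single]
    rw [toCycles_eq_of_toModel_eq (toModel_conjZ m)]

lemma exists_fromChains_eq (u : Nsub k) : ∃ d, (fromChains k d).toMul = u := by
  suffices ∀ x ∈ conjClosure k, ∃ d, ((fromChains k d).toMul : Met2 k) = x by
    obtain ⟨d, hd⟩ := this u (Nsub_eq_conjClosure ▸ u.2)
    exact ⟨d, Subtype.ext hd⟩
  intro x hx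
  induction hx using closure_induction with
  | mem _ h =>
    obtain ⟨m, rfl⟩ := h
    exact ⟨single m 1, by simp [fromChains]⟩
  | one => exact ⟨0, by simp⟩
  | mul x y _ _ hx hy =>
    obtain ⟨d, rfl⟩ := hx
    obtain ⟨e, rfl⟩ := hy
    exact ⟨d + e, by simp⟩
  | inv x _ hx =>
    obtain ⟨d, rfl⟩ := hx
    exact ⟨-d, by simp⟩

lemma toCycles_bijective (k : ℤ) : Function.Bijective (toCycles k) := by
  refine ⟨(injective_iff_map_eq_one _).mpr fun u hu => ?_, fun c => ?_⟩
  · obtain ⟨d, rfl⟩ := exists_fromChains_eq u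
    have hd : plaqMap d = 0 := by rw [← toCycles_fromChains, hu]; rfl
    rw [← retract_plaqMap d, hd, map_zero, map_zero, toMul_zero]
  · refine ⟨(fromChains k (retract c.toAdd)).toMul, toAdd.injective (Subtype.ext ?_)⟩
    rw [toCycles_fromChains, plaqMap_retract_of_bdZ_eq_zero c.toAdd.2]

end Met2

/-- `N` is abelian, and there is a group isomorphism `ψ : N ≃ Z_1(ℤ²)` with
`ψ(x^m y^n z (x^m y^n)⁻¹) = p(m,n)`, equivariant for conjugation over the projection
`π : Met_k(2) → ℤ²` (`π x = e₁`, `π y = e₂`, `π z = 0`): so `N` is isomorphic to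
`H_1(E²)` as a group with operators from `ℤ²`. -/
theorem N_iso_homology (k : ℤ) :
    (∀ a b : (Nsub k), a * b = b * a) ∧
    ∃ (π : Met2 k →* Multiplicative Z2)
      (ψ : (Nsub k) ≃* Multiplicative bdZ.ker),
      π (X k) = Multiplicative.ofAdd (Pi.single 0 1) ∧
      π (Y k) = Multiplicative.ofAdd (Pi.single 1 1) ∧
      π (Z k) = 1 ∧
      (∀ (m n : ℤ) (u : (Nsub k)),
        (u : Met2 k) = (X k ^ m * Y k ^ n) * Z k * (X k ^ m * Y k ^ n)⁻¹ →
        ((Multiplicative.toAdd (ψ u) : bdZ.ker) : C1Z2) = plaq2 ![m, n]) ∧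
      (∀ (g : Met2 k) (u v : (Nsub k)),
        (v : Met2 k) = g * (u : Met2 k) * g⁻¹ →
        ((Multiplicative.toAdd (ψ v) : bdZ.ker) : C1Z2)
          = shiftZ (Multiplicative.toAdd (π g))
              ((Multiplicative.toAdd (ψ u) : bdZ.ker) : C1Z2)) := by
  open Met2 in
  refine ⟨mul_comm', proj k, MulEquiv.ofBijective _ (toCycles_bijective k), by simp [proj_apply],
    by simp [proj_apply], by simp [proj_apply, gz], fun m n u hu => ?_, fun g u v hv => ?_⟩
  · exact toCycles_eq_of_toModel_eq (by rw [hu]; exact toModel_conjZ ![m, n])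
  · refine toCycles_eq_of_toModel_eq ?_
    rw [hv, map_mul, map_mul, map_inv, ← inl_toCycles u, SemidirectProduct.mul_inl_mul_inv]
    rfl
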